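/- arXiv:1408.0523 — 7 statements merged into one kernel-verified Lean document; each statement's English description precedes it below -/
import Mathlib

section
/- Let U be a selfadjoint bounded operator on H1 and D : H1 → H2 a bounded operator. Then there exists a bounded operator W on H2 with U = D*WD if and only if there exists δ ≥ 0 such that -δ·D*D ≤ U ≤ δ·D*D. Moreover, if U = D*WD with W selfadjoint, then one can take δ = ‖W‖. -/
open ContinuousLinearMap Complex

noncomputable section

variable {H1 H2 : Type*}
  [NormedAddCommGroup H1] [InnerProductSpace ℂ H1] [CompleteSpace H1]
  [NormedAddCommGroup H2] [InnerProductSpace ℂ H2] [CompleteSpace H2]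

/-- Real part of an operator. -/
def reOp {H : Type*} [NormedAddCommGroup H] [InnerProductSpace ℂ H] [CompleteSpace H]
    (T : H →L[ℂ] H) : H →L[ℂ] H := (2 : ℂ)⁻¹ • (T + adjoint T)

/-- Imaginary part of an operator. -/
def imOp {H : Type*} [NormedAddCommGroup H] [InnerProductSpace ℂ H] [CompleteSpace H]
    (T : H →L[ℂ] H) : H →L[ℂ] H := (2 * Complex.I : ℂ)⁻¹ • (T - adjoint T)

/-- The defect operator `D_C = (I - C*C)^{1/2}` (positive square root). -/
def defect {Ha Hb : Type*} [NormedAddCommGroup Ha] [InnerProductSpace ℂ Ha] [CompleteSpace Ha]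
    [NormedAddCommGroup Hb] [InnerProductSpace ℂ Hb] [CompleteSpace Hb]
    (C : Ha →L[ℂ] Hb) : Ha →L[ℂ] Ha := CFC.sqrt (1 - adjoint C ∘L C)

/-! Douglas' factorization: a pointwise bound `‖R x‖ ≤ c ‖D x‖` lets `R x ↦ D x` be read backwards
as a bounded operator on the range of `D`, which extends to its closure and then, through the
orthogonal projection, to all of `H2`. For a positive `A ≤ c D*D` this applies to `R = √A`, giving
`A = D* (C* C) D`. Now `-δ D*D ≤ U ≤ δ D*D` says exactly that `U + δ D*D` is positive and at most
`2δ D*D`, so `U = D* (C* C - δ) D`. Conversely `|⟪D* W D x, x⟫| = |⟪W D x, D x⟫| ≤ ‖W‖ ‖D x‖²`. -/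

open RCLike

section Factorization

variable {𝕜 E F G : Type*} [RCLike 𝕜]
  [NormedAddCommGroup E] [NormedSpace 𝕜 E]
  [NormedAddCommGroup F] [NormedSpace 𝕜 F] [CompleteSpace F]
  [NormedAddCommGroup G] [InnerProductSpace 𝕜 G] [CompleteSpace G]

theorem ContinuousLinearMap.exists_comp_eq_of_norm_le (R : E →L[𝕜] F) (D : E →L[𝕜] G) {c : ℝ}
    (h : ∀ x, ‖R x‖ ≤ c * ‖D x‖) : ∃ C : G →L[𝕜] F, C ∘L D = R := by
  set K := (D : E →ₗ[𝕜] G).range.topologicalClosure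
  let e : E →ₗ[𝕜] K := (D : E →ₗ[𝕜] G).codRestrict K
    fun x => (D : E →ₗ[𝕜] G).range.le_topologicalClosure ⟨x, rfl⟩
  have he : DenseRange e := by
    rw [DenseRange, Subtype.dense_iff, ← Set.range_comp]
    exact (Submodule.topologicalClosure_coe _).le
  have hRe : ∃ c, ∀ x, ‖R x‖ ≤ c * ‖e x‖ := ⟨c, h⟩
  refine ⟨(R : E →ₗ[𝕜] F).extendOfNorm e ∘L K.orthogonalProjectionOnto, ?_⟩
  ext x
  have hproj : K.orthogonalProjectionOnto (D x) = e x :=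
    K.orthogonalProjectionOnto_mem_subspace_eq_self (e x)
  simp [hproj, LinearMap.extendOfNorm_eq he hRe]

end Factorization

section QuadraticForm

variable {𝕜 E F : Type*} [RCLike 𝕜]
  [NormedAddCommGroup E] [InnerProductSpace 𝕜 E] [CompleteSpace E]
  [NormedAddCommGroup F] [InnerProductSpace 𝕜 F] [CompleteSpace F]

theorem ContinuousLinearMap.le_iff_forall_re_inner_le {X Y : E →L[𝕜] E}
    (hX : IsSelfAdjoint X) (hY : IsSelfAdjoint Y) :
    X ≤ Y ↔ ∀ x, re (inner 𝕜 (X x) x) ≤ re (inner 𝕜 (Y x) x) := by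
  simp [le_def, isPositive_def', hY.sub hX, reApplyInnerSelf, inner_sub_left]

theorem ContinuousLinearMap.re_inner_smul_adjoint_comp_self_apply (D : E →L[𝕜] F) (c : ℝ)
    (x : E) : re (inner 𝕜 (((c : 𝕜) • (adjoint D ∘L D)) x) x) = c * ‖D x‖ ^ 2 := by
  simp [inner_smul_left, adjoint_inner_left]

theorem ContinuousLinearMap.abs_re_inner_adjoint_comp_comp_apply_le (D : E →L[𝕜] F)
    (W : F →L[𝕜] F) (x : E) :
    |re (inner 𝕜 ((adjoint D ∘L W ∘L D) x) x)| ≤ ‖W‖ * ‖D x‖ ^ 2 :=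
  calc |re (inner 𝕜 ((adjoint D ∘L W ∘L D) x) x)|
      ≤ ‖inner 𝕜 (W (D x)) (D x)‖ := by
        simpa [adjoint_inner_left] using abs_re_le_norm (inner 𝕜 (W (D x)) (D x))
    _ ≤ ‖W (D x)‖ * ‖D x‖ := norm_inner_le_norm _ _
    _ ≤ ‖W‖ * ‖D x‖ * ‖D x‖ := by gcongr; exact W.le_opNorm _
    _ = ‖W‖ * ‖D x‖ ^ 2 := by ring

theorem ContinuousLinearMap.neg_smul_le_and_le_smul_iff {U : E →L[𝕜] E} (hU : IsSelfAdjoint U)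
    (D : E →L[𝕜] F) (δ : ℝ) :
    (-((δ : 𝕜) • (adjoint D ∘L D)) ≤ U ∧ U ≤ (δ : 𝕜) • (adjoint D ∘L D)) ↔
      ∀ x, |re (inner 𝕜 (U x) x)| ≤ δ * ‖D x‖ ^ 2 := by
  have hT : IsSelfAdjoint ((δ : 𝕜) • (adjoint D ∘L D)) :=
    .smul (by simp [IsSelfAdjoint]) (isPositive_adjoint_comp_self D).isSelfAdjoint
  rw [le_iff_forall_re_inner_le hT.neg hU, le_iff_forall_re_inner_le hU hT, ← forall_and]
  simp only [neg_apply, inner_neg_left, map_neg, re_inner_smul_adjoint_comp_self_apply, abs_le]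

end QuadraticForm

theorem ContinuousLinearMap.exists_eq_adjoint_comp_comp_of_nonneg_of_le {A : H1 →L[ℂ] H1}
    (D : H1 →L[ℂ] H2) {c : ℝ} (hA : 0 ≤ A) (h : A ≤ (c : ℂ) • (adjoint D ∘L D)) :
    ∃ W : H2 →L[ℂ] H2, A = adjoint D ∘L W ∘L D := by
  set R := CFC.sqrt A
  have hR : IsSelfAdjoint R := .of_nonneg (CFC.sqrt_nonneg A)
  have hRR : adjoint R ∘L R = A := by
    rw [← star_eq_adjoint, hR.star_eq]
    exact CFC.sqrt_mul_sqrt_self A hA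
  have hRD : ∀ x, ‖R x‖ ≤ √c * ‖D x‖ := by
    intro x
    have hAc := h.re_inner_nonneg_left x
    rw [sub_apply, inner_sub_left, map_sub, sub_nonneg] at hAc
    have hsq : ‖R x‖ ^ 2 ≤ c * ‖D x‖ ^ 2 :=
      calc ‖R x‖ ^ 2 = RCLike.re (inner ℂ (A x) x) := by
            rw [← hRR, comp_apply, adjoint_inner_left, inner_self_eq_norm_sq]
        _ ≤ c * ‖D x‖ ^ 2 := hAc.trans_eq (re_inner_smul_adjoint_comp_self_apply D c x)
    simpa [Real.sqrt_mul' c (sq_nonneg ‖D x‖)] using Real.abs_le_sqrt hsq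
  obtain ⟨C, hC⟩ := R.exists_comp_eq_of_norm_le D hRD
  exact ⟨adjoint C ∘L C, by rw [← hRR, ← hC, adjoint_comp]; rfl⟩

theorem stmt2 (U : H1 →L[ℂ] H1) (hU : IsSelfAdjoint U) (D : H1 →L[ℂ] H2) :
    ((∃ W : H2 →L[ℂ] H2, U = adjoint D ∘L W ∘L D) ↔
      ∃ δ : ℝ, 0 ≤ δ ∧
        -((δ : ℂ) • (adjoint D ∘L D)) ≤ U ∧ U ≤ (δ : ℂ) • (adjoint D ∘L D)) ∧
    (∀ W : H2 →L[ℂ] H2, IsSelfAdjoint W → U = adjoint D ∘L W ∘L D →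
      -((‖W‖ : ℂ) • (adjoint D ∘L D)) ≤ U ∧ U ≤ (‖W‖ : ℂ) • (adjoint D ∘L D)) := by
  have bound (W : H2 →L[ℂ] H2) (hW : U = adjoint D ∘L W ∘L D) :
      -((‖W‖ : ℂ) • (adjoint D ∘L D)) ≤ U ∧ U ≤ (‖W‖ : ℂ) • (adjoint D ∘L D) :=
    (neg_smul_le_and_le_smul_iff hU D _).2 fun x =>
      hW ▸ abs_re_inner_adjoint_comp_comp_apply_le D W x
  refine ⟨⟨fun ⟨W, hW⟩ => ⟨‖W‖, norm_nonneg W, bound W hW⟩, ?_⟩, fun W _ => bound W⟩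
  rintro ⟨δ, -, hlo, hhi⟩
  have hnonneg : 0 ≤ U + (δ : ℂ) • (adjoint D ∘L D) := neg_le_iff_add_nonneg.1 hlo
  have hle : U + (δ : ℂ) • (adjoint D ∘L D) ≤ ((2 * δ : ℝ) : ℂ) • (adjoint D ∘L D) :=
    calc _ ≤ (δ : ℂ) • (adjoint D ∘L D) + (δ : ℂ) • (adjoint D ∘L D) := add_le_add_left hhi _
      _ = _ := by push_cast; rw [← add_smul, two_mul]
  obtain ⟨W, hW⟩ := exists_eq_adjoint_comp_comp_of_nonneg_of_le D hnonneg hle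
  refine ⟨W - (δ : ℂ) • ContinuousLinearMap.id ℂ H2, ?_⟩
  rw [sub_comp, comp_sub, smul_comp, comp_smul, id_comp, ← hW]
  abel
end
end

section
/- Let A, B be contractions from H1 to H2 and suppose I - A*B = D_B Y D_B for some bounded operator Y on H1 (where D_B = (I - B*B)^{1/2}). Then 2Re(Y)' := D_B(2Re(Y) - I)D_B = D_A² + (A - B)*(A - B) ≥ 0; in particular D_B(2Re(Y) - I)D_B is positive semidefinite. -/
open ContinuousLinearMap Complex

noncomputable section

variable {H1 H2 : Type*}
  [NormedAddCommGroup H1] [InnerProductSpace ℂ H1] [CompleteSpace H1]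
  [NormedAddCommGroup H2] [InnerProductSpace ℂ H2] [CompleteSpace H2]

/-!
Since `D_B` is self-adjoint, `D_B (2 Re Y - I) D_B = X + X* - D_B²` with `X = D_B Y D_B = I - A*B`,
and `D_B² = I - B*B`. Expanding, `(I - A*B) + (I - B*A) - (I - B*B) = (I - A*A) + (A - B)*(A - B)`,
a sum of two positive operators: `I - A*A ≥ 0` because `‖A*A‖ = ‖A‖² ≤ 1`.
-/

section

variable {H K : Type*} [NormedAddCommGroup H] [InnerProductSpace ℂ H] [CompleteSpace H]
  [NormedAddCommGroup K] [InnerProductSpace ℂ K] [CompleteSpace K]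

theorem two_smul_reOp (T : H →L[ℂ] H) : (2 : ℂ) • reOp T = T + adjoint T := by
  rw [reOp, smul_smul, mul_inv_cancel₀ two_ne_zero, one_smul]

theorem conj_two_smul_reOp_sub_one {D : H →L[ℂ] H} (hD : IsSelfAdjoint D) (Y : H →L[ℂ] H) :
    D ∘L ((2 : ℂ) • reOp Y - 1) ∘L D = D ∘L Y ∘L D + adjoint (D ∘L Y ∘L D) - D ∘L D := by
  rw [two_smul_reOp, adjoint_comp, adjoint_comp, hD.adjoint_eq]
  ext x
  simp only [comp_apply, sub_apply, add_apply, one_apply_eq_self, map_add, map_sub]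

theorem one_sub_adjoint_comp_add_adjoint_sub (A B : H →L[ℂ] K) :
    (1 - adjoint A ∘L B) + adjoint (1 - adjoint A ∘L B) - (1 - adjoint B ∘L B)
      = (1 - adjoint A ∘L A) + adjoint (A - B) ∘L (A - B) := by
  rw [map_sub, ← star_eq_adjoint (1 : H →L[ℂ] H), star_one, adjoint_comp, adjoint_adjoint,
    map_sub]
  ext x
  simp only [comp_apply, sub_apply, add_apply, one_apply_eq_self, map_sub]
  abel

theorem one_sub_adjoint_comp_self_nonneg {A : H →L[ℂ] K} (hA : ‖A‖ ≤ 1) :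
    0 ≤ 1 - adjoint A ∘L A := by
  have hAA : 0 ≤ adjoint A ∘L A := (nonneg_iff_isPositive _).mpr (isPositive_adjoint_comp_self A)
  refine sub_nonneg.mpr ((CStarAlgebra.norm_le_one_iff_of_nonneg _ hAA).mp ?_)
  rw [norm_adjoint_comp_self]
  nlinarith [norm_nonneg A]

end

theorem stmt4_general (A B : H1 →L[ℂ] H2) (hA : ‖A‖ ≤ 1)
    (DB : H1 →L[ℂ] H1) (hDBpos : 0 ≤ DB) (hDBsq : DB ∘L DB = 1 - adjoint B ∘L B)
    (Y : H1 →L[ℂ] H1) (hY : 1 - adjoint A ∘L B = DB ∘L Y ∘L DB) :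
    DB ∘L ((2 : ℂ) • reOp Y - 1) ∘L DB
        = (1 - adjoint A ∘L A) + adjoint (A - B) ∘L (A - B) ∧
      0 ≤ DB ∘L ((2 : ℂ) • reOp Y - 1) ∘L DB := by
  have key : DB ∘L ((2 : ℂ) • reOp Y - 1) ∘L DB
      = (1 - adjoint A ∘L A) + adjoint (A - B) ∘L (A - B) := by
    rw [conj_two_smul_reOp_sub_one hDBpos.isSelfAdjoint, ← hY, hDBsq,
      one_sub_adjoint_comp_add_adjoint_sub]
  refine ⟨key, key ▸ add_nonneg (one_sub_adjoint_comp_self_nonneg hA) ?_⟩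
  exact (nonneg_iff_isPositive _).mpr (isPositive_adjoint_comp_self (A - B))

theorem stmt4 (A B : H1 →L[ℂ] H2) (hA : ‖A‖ ≤ 1) (hB : ‖B‖ ≤ 1)
    (DB : H1 →L[ℂ] H1) (hDBpos : 0 ≤ DB) (hDBsq : DB ∘L DB = 1 - adjoint B ∘L B)
    (Y : H1 →L[ℂ] H1) (hY : 1 - adjoint A ∘L B = DB ∘L Y ∘L DB) :
    DB ∘L ((2 : ℂ) • reOp Y - 1) ∘L DB
        = (1 - adjoint A ∘L A) + adjoint (A - B) ∘L (A - B) ∧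
      0 ≤ DB ∘L ((2 : ℂ) • reOp Y - 1) ∘L DB :=
  stmt4_general A B hA DB hDBpos hDBsq Y hY
end
end

section
/- Let A, B be contractions from H1 to H2 such that A - B = D_{B*} X D_B for some bounded operator X : H1 → H2 (Shmul'yan relation A ≺ B). Then I - A*B = D_B Y D_B holds with Y = I - X*B, and ‖Y‖ ≤ 1 + ‖X‖. -/
/-!
Expanding `A* = B* + D_B X* D_{B*}` gives `I - A*B = D_B² - D_B X* D_{B*} B`, so everything
rests on the intertwining `B D_B = D_{B*} B`. Its squared form `B (I - B*B) = (I - BB*) B` is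
algebra; to pass to square roots, note that on `H1 ⊕ H2` the operator `[[0, 0], [B, 0]]` then
commutes with `diag(D_B, D_{B*})²`, hence with its positive square root `diag(D_B, D_{B*})`.
-/

open ContinuousLinearMap Complex

noncomputable section

variable {H1 H2 : Type*}
  [NormedAddCommGroup H1] [InnerProductSpace ℂ H1] [CompleteSpace H1]
  [NormedAddCommGroup H2] [InnerProductSpace ℂ H2] [CompleteSpace H2]

open scoped ComplexOrder

theorem commute_of_commute_mul_self {A : Type*} [CStarAlgebra A] [PartialOrder A]
    [StarOrderedRing A] {a b : A} (ha : 0 ≤ a) (h : Commute (a * a) b) : Commute a b := by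
  simpa only [← CFC.sqrt_eq_cfc, CFC.sqrt_mul_self a ha] using h.cfc_nnreal NNReal.sqrt

section BlockOperators

variable {E F : Type*} [NormedAddCommGroup E] [InnerProductSpace ℂ E]
  [NormedAddCommGroup F] [InnerProductSpace ℂ F]

def blockDiag (a : E →L[ℂ] E) (b : F →L[ℂ] F) :
    WithLp 2 (E × F) →L[ℂ] WithLp 2 (E × F) :=
  (WithLp.prodContinuousLinearEquiv 2 ℂ E F).symm.conjContinuousAlgEquiv (a.prodMap b)

def blockLowerLeft (B : E →L[ℂ] F) : WithLp 2 (E × F) →L[ℂ] WithLp 2 (E × F) :=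
  (WithLp.prodContinuousLinearEquiv 2 ℂ E F).symm.conjContinuousAlgEquiv
    (inr ℂ E F ∘L B ∘L fst ℂ E F)

@[simp] lemma blockDiag_apply (a : E →L[ℂ] E) (b : F →L[ℂ] F) (z : WithLp 2 (E × F)) :
    blockDiag a b z = WithLp.toLp 2 (a z.fst, b z.snd) := rfl

@[simp] lemma blockLowerLeft_apply (B : E →L[ℂ] F) (z : WithLp 2 (E × F)) :
    blockLowerLeft B z = WithLp.toLp 2 (0, B z.fst) := rfl

lemma blockDiag_mul_blockDiag (a c : E →L[ℂ] E) (b d : F →L[ℂ] F) :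
    blockDiag a b * blockDiag c d = blockDiag (a * c) (b * d) := by
  ext z; simp

lemma blockDiag_mul_blockLowerLeft (a : E →L[ℂ] E) (b : F →L[ℂ] F) (B : E →L[ℂ] F) :
    blockDiag a b * blockLowerLeft B = blockLowerLeft (b ∘L B) := by
  ext z; simp

lemma blockLowerLeft_mul_blockDiag (a : E →L[ℂ] E) (b : F →L[ℂ] F) (B : E →L[ℂ] F) :
    blockLowerLeft B * blockDiag a b = blockLowerLeft (B ∘L a) := by
  ext z; simp

lemma blockLowerLeft_injective : Function.Injective (blockLowerLeft : (E →L[ℂ] F) → _) := by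
  intro B C h
  ext x
  simpa using congr(WithLp.snd ($h (WithLp.toLp 2 (x, 0))))

lemma blockDiag_nonneg [CompleteSpace E] [CompleteSpace F] {a : E →L[ℂ] E} {b : F →L[ℂ] F}
    (ha : 0 ≤ a) (hb : 0 ≤ b) :
    0 ≤ blockDiag a b := by
  rw [nonneg_iff_isPositive, isPositive_iff] at *
  refine ⟨fun x y => ?_, fun x => ?_⟩
  · simp only [coe_coe, blockDiag_apply, WithLp.prod_inner_apply]
    exact congrArg₂ (· + ·) (ha.1 x.fst y.fst) (hb.1 x.snd y.snd)
  · simpa [WithLp.prod_inner_apply] using add_nonneg (ha.2 x.fst) (hb.2 x.snd)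

end BlockOperators

theorem comp_eq_comp_of_comp_mul_self {E F : Type*} [NormedAddCommGroup E]
    [InnerProductSpace ℂ E] [CompleteSpace E] [NormedAddCommGroup F] [InnerProductSpace ℂ F]
    [CompleteSpace F] (B : E →L[ℂ] F) {a : E →L[ℂ] E} {b : F →L[ℂ] F} (ha : 0 ≤ a) (hb : 0 ≤ b)
    (h : B ∘L (a ∘L a) = (b ∘L b) ∘L B) : B ∘L a = b ∘L B := by
  have hsq : Commute (blockDiag a b * blockDiag a b) (blockLowerLeft B) := by
    rw [commute_iff_eq, blockDiag_mul_blockDiag, blockDiag_mul_blockLowerLeft,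
      blockLowerLeft_mul_blockDiag]
    exact congrArg blockLowerLeft h.symm
  have hcomm := commute_of_commute_mul_self (blockDiag_nonneg ha hb) hsq
  rw [commute_iff_eq, blockDiag_mul_blockLowerLeft, blockLowerLeft_mul_blockDiag] at hcomm
  exact (blockLowerLeft_injective hcomm).symm

lemma norm_one_sub_comp_le {𝕜 E F : Type*} [NontriviallyNormedField 𝕜] [NormedAddCommGroup E]
    [NormedSpace 𝕜 E] [NormedAddCommGroup F] [NormedSpace 𝕜 F] (T : F →L[𝕜] E) {B : E →L[𝕜] F}
    (hB : ‖B‖ ≤ 1) : ‖1 - T ∘L B‖ ≤ 1 + ‖T‖ :=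
  calc ‖1 - T ∘L B‖ ≤ ‖(1 : E →L[𝕜] E)‖ + ‖T‖ * ‖B‖ :=
        norm_sub_le_of_le le_rfl (opNorm_comp_le T B)
    _ ≤ 1 + ‖T‖ := add_le_add norm_id_le (mul_le_of_le_one_right (norm_nonneg T) hB)

theorem comp_defect_eq_defect_comp (B : H1 →L[ℂ] H2)
    {DB : H1 →L[ℂ] H1} (hDBpos : 0 ≤ DB) (hDBsq : DB ∘L DB = 1 - adjoint B ∘L B)
    {DBs : H2 →L[ℂ] H2} (hDBspos : 0 ≤ DBs) (hDBssq : DBs ∘L DBs = 1 - B ∘L adjoint B) :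
    B ∘L DB = DBs ∘L B := by
  refine comp_eq_comp_of_comp_mul_self B hDBpos hDBspos ?_
  simp only [hDBsq, hDBssq, comp_sub, sub_comp, one_def, comp_id, id_comp, comp_assoc]

theorem stmt6_general (A B : H1 →L[ℂ] H2) (hB : ‖B‖ ≤ 1)
    (DB : H1 →L[ℂ] H1) (hDBpos : 0 ≤ DB) (hDBsq : DB ∘L DB = 1 - adjoint B ∘L B)
    (DBs : H2 →L[ℂ] H2) (hDBspos : 0 ≤ DBs) (hDBssq : DBs ∘L DBs = 1 - B ∘L adjoint B)
    (X : H1 →L[ℂ] H2) (hX : A - B = DBs ∘L X ∘L DB) :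
    1 - adjoint A ∘L B = DB ∘L (1 - adjoint X ∘L B) ∘L DB ∧
      ‖(1 : H1 →L[ℂ] H1) - adjoint X ∘L B‖ ≤ 1 + ‖X‖ := by
  have hAadj : adjoint A = adjoint B + DB ∘L adjoint X ∘L DBs := by
    rw [← sub_eq_iff_eq_add', ← map_sub, hX, adjoint_comp, adjoint_comp,
      (IsSelfAdjoint.of_nonneg hDBpos).adjoint_eq, (IsSelfAdjoint.of_nonneg hDBspos).adjoint_eq,
      comp_assoc]
  have hintertwine := comp_defect_eq_defect_comp B hDBpos hDBsq hDBspos hDBssq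
  constructor
  · calc 1 - adjoint A ∘L B = DB ∘L DB - DB ∘L adjoint X ∘L (DBs ∘L B) := by
          rw [hAadj, hDBsq, add_comp]
          simp only [comp_assoc]
          abel
      _ = DB ∘L (1 - adjoint X ∘L B) ∘L DB := by
          rw [← hintertwine]
          simp only [sub_comp, comp_sub, one_def, id_comp, comp_assoc]
  · simpa only [LinearIsometryEquiv.norm_map] using norm_one_sub_comp_le (adjoint X) hB

theorem stmt6 (A B : H1 →L[ℂ] H2) (hA : ‖A‖ ≤ 1) (hB : ‖B‖ ≤ 1)
    (DB : H1 →L[ℂ] H1) (hDBpos : 0 ≤ DB) (hDBsq : DB ∘L DB = 1 - adjoint B ∘L B)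
    (DBs : H2 →L[ℂ] H2) (hDBspos : 0 ≤ DBs) (hDBssq : DBs ∘L DBs = 1 - B ∘L adjoint B)
    (X : H1 →L[ℂ] H2) (hX : A - B = DBs ∘L X ∘L DB) :
    1 - adjoint A ∘L B = DB ∘L (1 - adjoint X ∘L B) ∘L DB ∧
      ‖(1 : H1 →L[ℂ] H1) - adjoint X ∘L B‖ ≤ 1 + ‖X‖ :=
  stmt6_general A B hB DB hDBpos hDBsq DBs hDBspos hDBssq X hX
end
end

section
/- Let A, B be contractions from H1 to H2 with A ≺ B. Then closure(Ran D_A) ⊆ closure(Ran D_B), and A and B agree on the orthogonal complement of closure(Ran D_B). -/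
/-! If `D_B x = 0` then `A x = B x` because `A - B` factors through `D_B`, and then
`‖D_A x‖² = ‖x‖² - ‖A x‖² = ‖x‖² - ‖B x‖² = ‖D_B x‖² = 0`; so `ker D_B ⊆ ker D_A`.
For self-adjoint `D` the closure of the range is `(ker D)ᗮ` and the orthogonal complement of
the range is `ker D`, which gives both claims. -/

open ContinuousLinearMap Complex

noncomputable section

variable {H1 H2 : Type*}
  [NormedAddCommGroup H1] [InnerProductSpace ℂ H1] [CompleteSpace H1]
  [NormedAddCommGroup H2] [InnerProductSpace ℂ H2] [CompleteSpace H2]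

namespace ContinuousLinearMap

theorem apply_eq_of_sub_eq_comp {R M N : Type*} [Ring R] [TopologicalSpace M] [AddCommGroup M]
    [Module R M] [TopologicalSpace N] [AddCommGroup N] [IsTopologicalAddGroup N] [Module R N]
    {A B : M →L[R] N} {S : N →L[R] N} {X : M →L[R] N} {D : M →L[R] M}
    (hAB : A - B = S ∘L X ∘L D) {x : M} (hx : D x = 0) : A x = B x := by
  rw [← sub_eq_zero, ← sub_apply, hAB, comp_apply, comp_apply, hx, map_zero, map_zero]

variable {𝕜 E F : Type*} [RCLike 𝕜]
  [NormedAddCommGroup E] [InnerProductSpace 𝕜 E] [CompleteSpace E]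
  [NormedAddCommGroup F] [InnerProductSpace 𝕜 F] [CompleteSpace F]

theorem _root_.IsSelfAdjoint.closure_range_eq_orthogonal_ker {T : E →L[𝕜] E}
    (hT : IsSelfAdjoint T) :
    closure (Set.range T) = ((T : E →ₗ[𝕜] E).kerᗮ : Set E) := by
  rw [orthogonal_ker, hT.adjoint_eq, Submodule.topologicalClosure_coe, LinearMap.coe_range,
    coe_coe]

theorem norm_sq_apply_of_comp_self_eq_one_sub {C : E →L[𝕜] F} {D : E →L[𝕜] E}
    (hD : IsSelfAdjoint D) (hDsq : D ∘L D = 1 - adjoint C ∘L C) (x : E) :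
    ‖D x‖ ^ 2 = ‖x‖ ^ 2 - ‖C x‖ ^ 2 := by
  have h := congrArg (fun T : E →L[𝕜] E => RCLike.re (inner 𝕜 (T x) x)) hDsq
  simp only [comp_apply, sub_apply, one_apply_eq_self, inner_sub_left, map_sub,
    adjoint_inner_left] at h
  rwa [← hD.adjoint_eq, adjoint_inner_left, hD.adjoint_eq, inner_self_eq_norm_sq,
    inner_self_eq_norm_sq, inner_self_eq_norm_sq] at h

theorem ker_le_ker_of_sub_eq_comp {A B : E →L[𝕜] F} {DA DB : E →L[𝕜] E}
    (hDA : IsSelfAdjoint DA) (hDAsq : DA ∘L DA = 1 - adjoint A ∘L A)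
    (hDB : IsSelfAdjoint DB) (hDBsq : DB ∘L DB = 1 - adjoint B ∘L B)
    {S : F →L[𝕜] F} {X : E →L[𝕜] F} (hAB : A - B = S ∘L X ∘L DB) :
    (DB : E →ₗ[𝕜] E).ker ≤ (DA : E →ₗ[𝕜] E).ker := by
  intro x hx
  have hDBx : DB x = 0 := hx
  have hDAx : ‖DA x‖ ^ 2 = ‖DB x‖ ^ 2 := by
    rw [norm_sq_apply_of_comp_self_eq_one_sub hDA hDAsq, apply_eq_of_sub_eq_comp hAB hDBx,
      norm_sq_apply_of_comp_self_eq_one_sub hDB hDBsq]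
  simpa [hDBx] using hDAx

end ContinuousLinearMap

theorem stmt11_general (A B : H1 →L[ℂ] H2)
    (DA : H1 →L[ℂ] H1) (hDApos : 0 ≤ DA) (hDAsq : DA ∘L DA = 1 - adjoint A ∘L A)
    (DB : H1 →L[ℂ] H1) (hDBpos : 0 ≤ DB) (hDBsq : DB ∘L DB = 1 - adjoint B ∘L B)
    (DBs : H2 →L[ℂ] H2)
    (X : H1 →L[ℂ] H2) (hX : A - B = DBs ∘L X ∘L DB) :
    closure (Set.range DA) ⊆ closure (Set.range DB) ∧
      ∀ x ∈ ((LinearMap.range (DB : H1 →ₗ[ℂ] H1)).topologicalClosure)ᗮ, A x = B x := by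
  have hDA := IsSelfAdjoint.of_nonneg hDApos
  have hDB := IsSelfAdjoint.of_nonneg hDBpos
  refine ⟨?_, fun x hx ↦ apply_eq_of_sub_eq_comp hX ?_⟩
  · rw [hDA.closure_range_eq_orthogonal_ker, hDB.closure_range_eq_orthogonal_ker]
    exact Submodule.orthogonal_le (ker_le_ker_of_sub_eq_comp hDA hDAsq hDB hDBsq hX)
  · rwa [Submodule.orthogonal_closure, orthogonal_range, hDB.adjoint_eq] at hx

theorem stmt11 (A B : H1 →L[ℂ] H2) (hA : ‖A‖ ≤ 1) (hB : ‖B‖ ≤ 1)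
    (DA : H1 →L[ℂ] H1) (hDApos : 0 ≤ DA) (hDAsq : DA ∘L DA = 1 - adjoint A ∘L A)
    (DB : H1 →L[ℂ] H1) (hDBpos : 0 ≤ DB) (hDBsq : DB ∘L DB = 1 - adjoint B ∘L B)
    (DBs : H2 →L[ℂ] H2) (hDBspos : 0 ≤ DBs) (hDBssq : DBs ∘L DBs = 1 - B ∘L adjoint B)
    (X : H1 →L[ℂ] H2) (hX : A - B = DBs ∘L X ∘L DB) :
    closure (Set.range DA) ⊆ closure (Set.range DB) ∧
      ∀ x ∈ ((LinearMap.range (DB : H1 →ₗ[ℂ] H1)).topologicalClosure)ᗮ, A x = B x :=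
  stmt11_general A B DA hDApos hDAsq DB hDBpos hDBsq DBs X hX
end
end

section
/- Let B be a strict contraction from H1 to H2 and C a contraction with B ≺ C, i.e., B - C = D_{C*}XD_C for some bounded X. Then ‖C‖ < 1. -/
open ContinuousLinearMap Complex

noncomputable section

variable {H1 H2 : Type*}
  [NormedAddCommGroup H1] [InnerProductSpace ℂ H1] [CompleteSpace H1]
  [NormedAddCommGroup H2] [InnerProductSpace ℂ H2] [CompleteSpace H2]

/-
If `‖C‖ ≥ 1`, pick vectors `x` in the unit ball with `‖C x‖` close to `1`. Since
`‖D_C x‖² = ‖x‖² - ‖C x‖²`, the defect `D_C x` is then small, and so is `(B - C) x`, which factors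
through `D_C`. Hence `‖B x‖` is also close to `1`, which is impossible when `‖B‖ < 1`.
-/

open Filter Topology

namespace ContinuousLinearMap

section Factorization

variable {𝕜 E F G : Type*} [DenselyNormedField 𝕜]
  [NormedAddCommGroup E] [NormedSpace 𝕜 E] [SeminormedAddCommGroup F] [NormedSpace 𝕜 F]
  [SeminormedAddCommGroup G] [NormedSpace 𝕜 G]

theorem norm_apply_le_of_sub_eq_comp {B C : E →L[𝕜] F} {D : E →L[𝕜] G} {Y : G →L[𝕜] F}
    (hY : B - C = Y ∘L D) (x : E) : ‖C x‖ ≤ ‖B x‖ + ‖Y‖ * ‖D x‖ :=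
  calc ‖C x‖ ≤ ‖B x‖ + ‖B x - C x‖ := norm_le_norm_add_norm_sub (B x) (C x)
    _ = ‖B x‖ + ‖Y (D x)‖ := by rw [← sub_apply, hY, comp_apply]
    _ ≤ ‖B x‖ + ‖Y‖ * ‖D x‖ := by gcongr; exact Y.le_opNorm _

theorem norm_lt_one_of_sub_eq_comp {B C : E →L[𝕜] F} {D : E →L[𝕜] G} {Y : G →L[𝕜] F}
    (hB : ‖B‖ < 1) (hD : ∀ x, ‖D x‖ ^ 2 + ‖C x‖ ^ 2 ≤ ‖x‖ ^ 2) (hY : B - C = Y ∘L D) :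
    ‖C‖ < 1 := by
  by_contra! hC
  have hsmall : Tendsto (fun ε : ℝ ↦ ε + ‖Y‖ * √(2 * ε)) (𝓝[>] 0) (𝓝 0) := by
    have : Continuous fun ε : ℝ ↦ ε + ‖Y‖ * √(2 * ε) := by fun_prop
    simpa using (this.tendsto 0).mono_left nhdsWithin_le_nhds
  obtain ⟨ε, hε, hε0 : 0 < ε⟩ :=
    ((hsmall.eventually (gt_mem_nhds (sub_pos.2 hB))).and self_mem_nhdsWithin).exists
  have hε1 : ε < 1 := by
    linarith [norm_nonneg B, mul_nonneg (norm_nonneg Y) (Real.sqrt_nonneg (2 * ε))]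
  obtain ⟨x, hx, hCx⟩ := C.exists_lt_apply_of_lt_opNorm (r := 1 - ε) (by linarith)
  have hDx : ‖D x‖ ≤ √(2 * ε) := by
    rw [Real.le_sqrt (norm_nonneg _) (by linarith)]
    nlinarith [hD x, norm_nonneg x, norm_nonneg (C x)]
  have : 1 - ε < ‖B‖ + ‖Y‖ * √(2 * ε) :=
    calc 1 - ε < ‖C x‖ := hCx
      _ ≤ ‖B x‖ + ‖Y‖ * ‖D x‖ := norm_apply_le_of_sub_eq_comp hY x
      _ ≤ ‖B‖ + ‖Y‖ * √(2 * ε) := by gcongr; exact B.unit_le_opNorm x hx.le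
  linarith

end Factorization

theorem norm_sq_apply_add_norm_sq_apply {𝕜 E F : Type*} [RCLike 𝕜]
    [NormedAddCommGroup E] [InnerProductSpace 𝕜 E] [CompleteSpace E]
    [NormedAddCommGroup F] [InnerProductSpace 𝕜 F] [CompleteSpace F]
    {C : E →L[𝕜] F} {D : E →L[𝕜] E} (hD : IsSelfAdjoint D)
    (hD2 : D ∘L D = 1 - adjoint C ∘L C) (x : E) : ‖D x‖ ^ 2 + ‖C x‖ ^ 2 = ‖x‖ ^ 2 := by
  rw [D.apply_norm_sq_eq_inner_adjoint_left, C.apply_norm_sq_eq_inner_adjoint_left, hD.adjoint_eq,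
    hD2, sub_apply, inner_sub_left, map_sub, one_apply_eq_self, inner_self_eq_norm_sq]
  ring

end ContinuousLinearMap

theorem stmt14_general (B C : H1 →L[ℂ] H2) (hB : ‖B‖ < 1)
    (DC : H1 →L[ℂ] H1) (hDCpos : 0 ≤ DC) (hDCsq : DC ∘L DC = 1 - adjoint C ∘L C)
    (DCs : H2 →L[ℂ] H2)
    (X : H1 →L[ℂ] H2) (hX : B - C = DCs ∘L X ∘L DC) : ‖C‖ < 1 :=
  have hDC : IsSelfAdjoint DC := ((nonneg_iff_isPositive DC).1 hDCpos).isSelfAdjoint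
  norm_lt_one_of_sub_eq_comp (Y := DCs ∘L X) hB
    (fun x ↦ (norm_sq_apply_add_norm_sq_apply hDC hDCsq x).le) hX

theorem stmt14 (B C : H1 →L[ℂ] H2) (hB : ‖B‖ < 1) (hC : ‖C‖ ≤ 1)
    (DC : H1 →L[ℂ] H1) (hDCpos : 0 ≤ DC) (hDCsq : DC ∘L DC = 1 - adjoint C ∘L C)
    (DCs : H2 →L[ℂ] H2) (hDCspos : 0 ≤ DCs) (hDCssq : DCs ∘L DCs = 1 - C ∘L adjoint C)
    (X : H1 →L[ℂ] H2) (hX : B - C = DCs ∘L X ∘L DC) : ‖C‖ < 1 :=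
  stmt14_general B C hB DC hDCpos hDCsq DCs X hX
end
end

section
/- Let A, B be contractions from H1 to H2 such that I - A*B = D_A Ỹ D_B for some bounded operator Ỹ. Then ‖D_A x‖ ≤ 2‖Ỹ‖·‖D_B x‖ for every x ∈ H1; consequently there exists a bounded operator M with D_A = M D_B and ‖M‖ ≤ 2‖Ỹ‖. -/
open ContinuousLinearMap Complex

noncomputable section

variable {H1 H2 : Type*}
  [NormedAddCommGroup H1] [InnerProductSpace ℂ H1] [CompleteSpace H1]
  [NormedAddCommGroup H2] [InnerProductSpace ℂ H2] [CompleteSpace H2]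

/-!
Expanding norms,
`2 Re ⟪D_A x, Ỹ D_B x⟫ = 2 Re ⟪x, (I - A*B) x⟫ = ‖D_A x‖² + ‖D_B x‖² + ‖(A - B) x‖²`,
so `‖D_A x‖² ≤ 2 ‖D_A x‖ ‖Ỹ‖ ‖D_B x‖`. The factorization is Douglas' lemma: `D_B x ↦ D_A x` is
well defined and bounded by `2 ‖Ỹ‖` on the range of `D_B`; extend it by continuity to the
closure of that range and by zero on its orthogonal complement.
-/

open scoped InnerProductSpace

namespace ContinuousLinearMap

variable {𝕜 E F F' G : Type*} [RCLike 𝕜]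

section Factorization

variable [NormedAddCommGroup E] [NormedSpace 𝕜 E]
  [NormedAddCommGroup F] [InnerProductSpace 𝕜 F] [CompleteSpace F]
  [NormedAddCommGroup G] [NormedSpace 𝕜 G] [CompleteSpace G]

theorem exists_eq_comp_of_forall_norm_apply_le (T : E →L[𝕜] G) (S : E →L[𝕜] F) {c : ℝ}
    (hc : 0 ≤ c) (h : ∀ x, ‖T x‖ ≤ c * ‖S x‖) :
    ∃ M : F →L[𝕜] G, T = M ∘L S ∧ ‖M‖ ≤ c := by
  set K := (LinearMap.range (S : E →ₗ[𝕜] F)).topologicalClosure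
  have : CompleteSpace K := Submodule.isClosed_topologicalClosure _ |>.completeSpace_coe
  let e : E →ₗ[𝕜] K := (S : E →ₗ[𝕜] F).codRestrict K
    fun x ↦ Submodule.le_topologicalClosure _ (LinearMap.mem_range_self _ x)
  have he : DenseRange e := by
    rw [DenseRange, Subtype.dense_iff, ← Set.range_comp]
    exact subset_refl _
  refine ⟨(T : E →ₗ[𝕜] G).extendOfNorm e ∘L K.orthogonalProjectionOnto, ?_, ?_⟩
  · ext x
    have hSx : K.orthogonalProjectionOnto (S x) = e x :=
      K.orthogonalProjectionOnto_mem_subspace_eq_self (e x)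
    simp only [comp_apply, hSx, LinearMap.extendOfNorm_eq he ⟨c, h⟩]
    rfl
  · calc ‖(T : E →ₗ[𝕜] G).extendOfNorm e ∘L K.orthogonalProjectionOnto‖
        ≤ ‖(T : E →ₗ[𝕜] G).extendOfNorm e‖ * ‖K.orthogonalProjectionOnto‖ := opNorm_comp_le _ _
      _ ≤ c * 1 := by
        gcongr
        exacts [LinearMap.opNorm_extendOfNorm_le he hc h, K.orthogonalProjectionOnto_norm_le]
      _ = c := mul_one c

end Factorization

variable [NormedAddCommGroup E] [InnerProductSpace 𝕜 E] [CompleteSpace E]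
  [NormedAddCommGroup F] [InnerProductSpace 𝕜 F] [CompleteSpace F]
  [NormedAddCommGroup F'] [InnerProductSpace 𝕜 F'] [CompleteSpace F']
  [NormedAddCommGroup G] [InnerProductSpace 𝕜 G] [CompleteSpace G]

theorem inner_apply_eq_of_adjoint_comp_eq {A B : E →L[𝕜] F} {D Y : E →L[𝕜] F'}
    (h : adjoint D ∘L Y = 1 - adjoint A ∘L B) (x : E) :
    ⟪D x, Y x⟫_𝕜 = ⟪x, x⟫_𝕜 - ⟪A x, B x⟫_𝕜 := by
  rw [← adjoint_inner_right, ← comp_apply, h, sub_apply, one_apply_eq_self, inner_sub_right,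
    comp_apply, adjoint_inner_right]

theorem norm_apply_sq_eq_of_adjoint_comp_self_eq {C : E →L[𝕜] F} {D : E →L[𝕜] F'}
    (h : adjoint D ∘L D = 1 - adjoint C ∘L C) (x : E) : ‖D x‖ ^ 2 = ‖x‖ ^ 2 - ‖C x‖ ^ 2 := by
  rw [apply_norm_sq_eq_inner_adjoint_right, h, sub_apply, one_apply_eq_self, inner_sub_right,
    map_sub, inner_self_eq_norm_sq, ← apply_norm_sq_eq_inner_adjoint_right]

theorem two_mul_re_inner_eq {A B : E →L[𝕜] F} {DA Y : E →L[𝕜] F'} {DB : E →L[𝕜] G}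
    (hDA : adjoint DA ∘L DA = 1 - adjoint A ∘L A) (hDB : adjoint DB ∘L DB = 1 - adjoint B ∘L B)
    (hY : adjoint DA ∘L Y = 1 - adjoint A ∘L B) (x : E) :
    2 * RCLike.re ⟪DA x, Y x⟫_𝕜 = ‖DA x‖ ^ 2 + ‖DB x‖ ^ 2 + ‖A x - B x‖ ^ 2 := by
  rw [inner_apply_eq_of_adjoint_comp_eq hY, map_sub, inner_self_eq_norm_sq,
    norm_apply_sq_eq_of_adjoint_comp_self_eq hDA, norm_apply_sq_eq_of_adjoint_comp_self_eq hDB,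
    norm_sub_sq (𝕜 := 𝕜)]
  ring

theorem norm_apply_le_two_mul_of_adjoint_comp_eq {A B : E →L[𝕜] F} {DA Y : E →L[𝕜] F'}
    {DB : E →L[𝕜] G} (hDA : adjoint DA ∘L DA = 1 - adjoint A ∘L A)
    (hDB : adjoint DB ∘L DB = 1 - adjoint B ∘L B) (hY : adjoint DA ∘L Y = 1 - adjoint A ∘L B)
    (x : E) : ‖DA x‖ ≤ 2 * ‖Y x‖ := by
  have hsq : ‖DA x‖ ^ 2 ≤ ‖DA x‖ * (2 * ‖Y x‖) := by
    have := two_mul_re_inner_eq hDA hDB hY x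
    have := re_inner_le_norm (𝕜 := 𝕜) (DA x) (Y x)
    nlinarith [sq_nonneg ‖DB x‖, sq_nonneg ‖A x - B x‖]
  nlinarith [norm_nonneg (DA x), norm_nonneg (Y x)]

end ContinuousLinearMap

theorem stmt15_general (A B : H1 →L[ℂ] H2)
    (DA : H1 →L[ℂ] H1) (hDApos : 0 ≤ DA) (hDAsq : DA ∘L DA = 1 - adjoint A ∘L A)
    (DB : H1 →L[ℂ] H1) (hDBpos : 0 ≤ DB) (hDBsq : DB ∘L DB = 1 - adjoint B ∘L B)
    (Yt : H1 →L[ℂ] H1) (hY : 1 - adjoint A ∘L B = DA ∘L Yt ∘L DB) :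
    (∀ x : H1, ‖DA x‖ ≤ 2 * ‖Yt‖ * ‖DB x‖) ∧
      ∃ M : H1 →L[ℂ] H1, DA = M ∘L DB ∧ ‖M‖ ≤ 2 * ‖Yt‖ := by
  have hDA : adjoint DA = DA := (IsSelfAdjoint.of_nonneg hDApos).adjoint_eq
  have hDB : adjoint DB = DB := (IsSelfAdjoint.of_nonneg hDBpos).adjoint_eq
  have hbound (x : H1) : ‖DA x‖ ≤ 2 * ‖Yt‖ * ‖DB x‖ :=
    calc ‖DA x‖ ≤ 2 * ‖(Yt ∘L DB) x‖ :=
          norm_apply_le_two_mul_of_adjoint_comp_eq (A := A) (B := B) (by rwa [hDA]) (by rwa [hDB])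
            (by rw [hDA, hY]) x
      _ ≤ 2 * ‖Yt‖ * ‖DB x‖ := by
          rw [mul_assoc]
          gcongr
          exact Yt.le_opNorm (DB x)
  exact ⟨hbound, exists_eq_comp_of_forall_norm_apply_le DA DB (by positivity) hbound⟩

theorem stmt15 (A B : H1 →L[ℂ] H2) (hA : ‖A‖ ≤ 1) (hB : ‖B‖ ≤ 1)
    (DA : H1 →L[ℂ] H1) (hDApos : 0 ≤ DA) (hDAsq : DA ∘L DA = 1 - adjoint A ∘L A)
    (DB : H1 →L[ℂ] H1) (hDBpos : 0 ≤ DB) (hDBsq : DB ∘L DB = 1 - adjoint B ∘L B)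
    (Yt : H1 →L[ℂ] H1) (hY : 1 - adjoint A ∘L B = DA ∘L Yt ∘L DB) :
    (∀ x : H1, ‖DA x‖ ≤ 2 * ‖Yt‖ * ‖DB x‖) ∧
      ∃ M : H1 →L[ℂ] H1, DA = M ∘L DB ∧ ‖M‖ ≤ 2 * ‖Yt‖ :=
  stmt15_general A B DA hDApos hDAsq DB hDBpos hDBsq Yt hY
end
end

section
/- Let X_t : H → H1 and Y_t : H → H2 for t ∈ (0,1] be bounded operators with X_t*X_t ≥ Y_t*Y_t for all t, and assume X_t → X_1 and Y_t → Y_1 strongly as t ↑ 1. Then there exist contractions Z_t : H1 → H2 with Y_t = Z_t X_t for each t and Z_t w → Z_1 w for every w in the closure of the range of X_1. -/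
/-! From `X_t* X_t ≥ Y_t* Y_t` we get `‖Y_t v‖ ≤ ‖X_t v‖`, so `X_t v ↦ Y_t v` is a well-defined
contraction on the range of `X_t`; extending it to the closure of the range and composing with the
orthogonal projection onto that closure gives `Z_t`. For `w = X_1 v`,
`Z_t w = Z_t (X_1 v - X_t v) + Y_t v → Y_1 v = Z_1 w` because the `Z_t` are contractions, and a
uniformly bounded family of operators is equicontinuous, so the set where `Z_t w → Z_1 w` is
closed. -/

open ContinuousLinearMap Complex

noncomputable section

variable {H1 H2 : Type*}
  [NormedAddCommGroup H1] [InnerProductSpace ℂ H1] [CompleteSpace H1]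
  [NormedAddCommGroup H2] [InnerProductSpace ℂ H2] [CompleteSpace H2]

open Filter Topology

section Factorization

variable {𝕜 E F G : Type*} [RCLike 𝕜]
  [NormedAddCommGroup E] [NormedAddCommGroup F] [NormedAddCommGroup G]

theorem ContinuousLinearMap.norm_apply_le_of_adjoint_comp_self_le
    [InnerProductSpace 𝕜 E] [CompleteSpace E] [InnerProductSpace 𝕜 F] [CompleteSpace F]
    [InnerProductSpace 𝕜 G] [CompleteSpace G] {A : E →L[𝕜] F} {B : E →L[𝕜] G}
    (h : adjoint B ∘L B ≤ adjoint A ∘L A) (v : E) : ‖B v‖ ≤ ‖A v‖ := by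
  have hsq : ‖B v‖ ^ 2 ≤ ‖A v‖ ^ 2 := by
    have := h.re_inner_nonneg_left v
    rwa [sub_apply, inner_sub_left, map_sub, ← apply_norm_sq_eq_inner_adjoint_left,
      ← apply_norm_sq_eq_inner_adjoint_left, sub_nonneg] at this
  exact le_of_pow_le_pow_left₀ two_ne_zero (norm_nonneg _) hsq

variable [NormedSpace 𝕜 E] [NormedSpace 𝕜 G]

theorem ContinuousLinearMap.exists_range_comp_eq_of_norm_apply_le [NormedSpace 𝕜 F]
    (A : E →L[𝕜] F) (B : E →L[𝕜] G) (h : ∀ v, ‖B v‖ ≤ ‖A v‖) :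
    ∃ f : LinearMap.range (A : E →ₗ[𝕜] F) →L[𝕜] G, ‖f‖ ≤ 1 ∧
      ∀ v, f ⟨A v, LinearMap.mem_range_self (A : E →ₗ[𝕜] F) v⟩ = B v := by
  have hker : LinearMap.ker (A : E →ₗ[𝕜] F) ≤ LinearMap.ker (B : E →ₗ[𝕜] G) := fun v hv =>
    LinearMap.mem_ker.mpr <| norm_le_zero_iff.mp <| (h v).trans_eq <| by simpa using hv
  let f : LinearMap.range (A : E →ₗ[𝕜] F) →ₗ[𝕜] G :=
    (LinearMap.ker (A : E →ₗ[𝕜] F)).liftQ B hker ∘ₗ (A : E →ₗ[𝕜] F).quotKerEquivRange.symm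
  have hf : ∀ v, f ⟨A v, LinearMap.mem_range_self (A : E →ₗ[𝕜] F) v⟩ = B v := fun v =>
    congrArg (Submodule.liftQ _ _ hker) ((A : E →ₗ[𝕜] F).quotKerEquivRange_symm_apply_image v _)
  have hbound : ∀ w, ‖f w‖ ≤ 1 * ‖w‖ := by
    rintro ⟨_, v, rfl⟩
    simpa [hf] using h v
  exact ⟨f.mkContinuous 1 hbound, f.mkContinuous_norm_le zero_le_one hbound, hf⟩

variable [InnerProductSpace 𝕜 F] [CompleteSpace F] [CompleteSpace G]

theorem Submodule.exists_extension_opNorm_le (R : Submodule 𝕜 F) (f : R →L[𝕜] G) :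
    ∃ g : F →L[𝕜] G, ‖g‖ ≤ ‖f‖ ∧ ∀ x : R, g x = f x := by
  let K := R.topologicalClosure
  let e : R →L[𝕜] K := R.subtypeL.codRestrict K fun x => R.le_topologicalClosure x.2
  have he : ∀ x, ‖x‖ ≤ (1 : NNReal) * ‖e x‖ := fun x => by simp [e]
  have hdense : DenseRange e := by
    have hrange : Set.range (Subtype.val ∘ e) = R := Subtype.range_coe
    rw [DenseRange, Subtype.dense_iff, ← Set.range_comp]
    exact R.topologicalClosure_coe.le.trans (closure_mono hrange.ge)
  refine ⟨f.extend e ∘L K.orthogonalProjectionOnto, ?_, fun x => ?_⟩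
  · calc ‖f.extend e ∘L K.orthogonalProjectionOnto‖
        ≤ ‖f.extend e‖ * ‖K.orthogonalProjectionOnto‖ := opNorm_comp_le _ _
      _ ≤ ‖f‖ * 1 := by
        gcongr
        · simpa using f.opNorm_extend_le hdense he
        · exact K.orthogonalProjectionOnto_norm_le
      _ = ‖f‖ := mul_one _
  · have : K.orthogonalProjectionOnto (x : F) = e x :=
      K.orthogonalProjectionOnto_mem_subspace_eq_self (e x)
    rw [comp_apply, this, f.extend_eq hdense (isUniformEmbedding_of_bound e he).isUniformInducing]

theorem ContinuousLinearMap.exists_norm_le_one_comp_eq_of_norm_apply_le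
    (A : E →L[𝕜] F) (B : E →L[𝕜] G) (h : ∀ v, ‖B v‖ ≤ ‖A v‖) :
    ∃ Z : F →L[𝕜] G, ‖Z‖ ≤ 1 ∧ Z ∘L A = B := by
  obtain ⟨f, hf_norm, hf⟩ := A.exists_range_comp_eq_of_norm_apply_le B h
  obtain ⟨Z, hZ_norm, hZ⟩ := (LinearMap.range (A : E →ₗ[𝕜] F)).exists_extension_opNorm_le f
  exact ⟨Z, hZ_norm.trans hf_norm, ext fun v => (hZ _).trans (hf v)⟩

end Factorization

section StrongConvergence

variable {ι 𝕜 F G : Type*} [RCLike 𝕜] [NormedAddCommGroup F] [NormedSpace 𝕜 F]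
  [NormedAddCommGroup G] [NormedSpace 𝕜 G] {l : Filter ι} {Z : ι → F →L[𝕜] G}

theorem tendsto_apply_of_tendsto_apply_of_norm_le {C : ℝ} (hZ : ∀ t, ‖Z t‖ ≤ C)
    {x : ι → F} {x₀ : F} (hx : Tendsto x l (𝓝 x₀)) {y : G}
    (hy : Tendsto (fun t => Z t (x t)) l (𝓝 y)) : Tendsto (fun t => Z t x₀) l (𝓝 y) := by
  have hdiff : Tendsto (fun t => Z t (x₀ - x t)) l (𝓝 0) := by
    refine squeeze_zero_norm (fun t => (Z t).le_of_opNorm_le (hZ t) _) ?_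
    simpa [norm_sub_rev] using (tendsto_iff_norm_sub_tendsto_zero.mp hx).const_mul C
  simpa using hdiff.add hy

theorem tendsto_apply_of_mem_closure {C : NNReal} (hZ : ∀ t, ‖Z t‖ ≤ C) (T : F →L[𝕜] G)
    {S : Set F} (hS : ∀ x ∈ S, Tendsto (fun t => Z t x) l (𝓝 (T x)))
    {x : F} (hx : x ∈ closure S) : Tendsto (fun t => Z t x) l (𝓝 (T x)) := by
  have hequi : Equicontinuous fun t => ⇑(Z t) :=
    (LipschitzWith.uniformEquicontinuous _ C fun t =>
      (Z t).lipschitz.weaken (by exact_mod_cast hZ t)).equicontinuous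
  exact (hequi.isClosed_setOfPred_tendsto T.continuous).closure_subset_iff.mpr hS hx

end StrongConvergence

theorem stmt18 {H : Type*} [NormedAddCommGroup H] [InnerProductSpace ℂ H] [CompleteSpace H]
    (X : ℝ → (H →L[ℂ] H1)) (Yf : ℝ → (H →L[ℂ] H2))
    (hdom : ∀ t ∈ Set.Ioc (0 : ℝ) 1,
      adjoint (Yf t) ∘L Yf t ≤ adjoint (X t) ∘L X t)
    (hXconv : ∀ v : H, Filter.Tendsto (fun t => X t v)
      (nhdsWithin 1 (Set.Ioo (0 : ℝ) 1)) (nhds (X 1 v)))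
    (hYconv : ∀ v : H, Filter.Tendsto (fun t => Yf t v)
      (nhdsWithin 1 (Set.Ioo (0 : ℝ) 1)) (nhds (Yf 1 v))) :
    ∃ Z : ℝ → (H1 →L[ℂ] H2),
      (∀ t ∈ Set.Ioc (0 : ℝ) 1, ‖Z t‖ ≤ 1 ∧ Yf t = Z t ∘L X t) ∧
      ∀ w ∈ closure (Set.range (X 1)), Filter.Tendsto (fun t => Z t w)
        (nhdsWithin 1 (Set.Ioo (0 : ℝ) 1)) (nhds (Z 1 w)) := by
  -- `Z t := 0` off `(0, 1]` keeps the whole family uniformly bounded.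
  have hfactor : ∀ t, ∃ Z : H1 →L[ℂ] H2, ‖Z‖ ≤ 1 ∧ (t ∈ Set.Ioc (0 : ℝ) 1 → Z ∘L X t = Yf t) := by
    intro t
    by_cases ht : t ∈ Set.Ioc (0 : ℝ) 1
    · obtain ⟨Z, hZ_norm, hZ⟩ := (X t).exists_norm_le_one_comp_eq_of_norm_apply_le (Yf t)
        (norm_apply_le_of_adjoint_comp_self_le (hdom t ht))
      exact ⟨Z, hZ_norm, fun _ => hZ⟩
    · exact ⟨0, by simp, fun h => absurd h ht⟩
  choose Z hZ_norm hZ using hfactor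
  refine ⟨Z, fun t ht => ⟨hZ_norm t, (hZ t ht).symm⟩, fun w hw => ?_⟩
  refine tendsto_apply_of_mem_closure (C := 1) (by simpa using hZ_norm) (Z 1) ?_ hw
  rintro _ ⟨v, rfl⟩
  refine tendsto_apply_of_tendsto_apply_of_norm_le hZ_norm (hXconv v) ?_
  rw [← comp_apply, hZ 1 ⟨one_pos, le_rfl⟩]
  refine (hYconv v).congr' (eventually_nhdsWithin_of_forall fun t ht => ?_)
  exact (DFunLike.congr_fun (hZ t (Set.Ioo_subset_Ioc_self ht)) v).symm
end
end
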